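/- arXiv:2309.03534 — 2 statements merged into one kernel-verified Lean document; each statement's English description precedes it below -/
import Mathlib

section
/- Let ρ₊, ρ₋ > 0 and let h₊, h₋, w be vectors in ℝ³ such that h₊ × h₋ ≠ 0 and w lies in the plane P spanned by h₊ and h₋. Assume the strict Syrovatskij condition (ρ₊ + ρ₋)·‖h₊ × h₋‖² > ρ₊·‖h₊ × w‖² + ρ₋·‖h₋ × w‖². Then for every nonzero vector a ∈ P, one has (ρ₊/(ρ₊+ρ₋))·(a·h₊)² + (ρ₋/(ρ₊+ρ₋))·(a·h₋)² − (ρ₊·ρ₋/(ρ₊+ρ₋)²)·(a·w)² > 0. -/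
/-!
Write `w = c₊ h₊ + c₋ h₋`. Then `h₊ × w = c₋ (h₊ × h₋)` and `h₋ × w = -c₊ (h₊ × h₋)`, so the
Syrovatskij condition says `ρ₊ c₋² + ρ₋ c₊² < ρ₊ + ρ₋`. With `x = a · h₊`, `y = a · h₋` we have
`a · w = c₊ x + c₋ y`, and by weighted Cauchy–Schwarz
`ρ₊ ρ₋ (c₊ x + c₋ y)² ≤ (ρ₊ c₋² + ρ₋ c₊²)(ρ₊ x² + ρ₋ y²) < (ρ₊ + ρ₋)(ρ₊ x² + ρ₋ y²)`,
the last step because `a ≠ 0` in the plane cannot be orthogonal to both `h₊` and `h₋`.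
-/

open scoped RealInnerProductSpace

/-- Cross product on `EuclideanSpace ℝ (Fin 3)`. -/
noncomputable def cross3 (a b : EuclideanSpace ℝ (Fin 3)) : EuclideanSpace ℝ (Fin 3) :=
  (WithLp.equiv 2 (Fin 3 → ℝ)).symm
    (crossProduct ((WithLp.equiv 2 (Fin 3 → ℝ)) a) ((WithLp.equiv 2 (Fin 3 → ℝ)) b))

section Cross3

variable (u v : EuclideanSpace ℝ (Fin 3))

lemma cross3_smul_add_smul_right (v₁ v₂ : EuclideanSpace ℝ (Fin 3)) (c₁ c₂ : ℝ) :
    cross3 u (c₁ • v₁ + c₂ • v₂) = c₁ • cross3 u v₁ + c₂ • cross3 u v₂ := by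
  simp [cross3]

lemma cross3_self : cross3 u u = 0 := by
  simp [cross3]

lemma cross3_anticomm : cross3 u v = -cross3 v u := by
  unfold cross3
  rw [← cross_anticomm]
  rfl

lemma cross3_left_smul_add_smul (c d : ℝ) : cross3 u (c • u + d • v) = d • cross3 u v := by
  rw [cross3_smul_add_smul_right, cross3_self, smul_zero, zero_add]

lemma cross3_right_smul_add_smul (c d : ℝ) : cross3 v (c • u + d • v) = (-c) • cross3 u v := by
  rw [cross3_smul_add_smul_right, cross3_self, cross3_anticomm v u, smul_zero, add_zero,
    smul_neg, neg_smul]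

end Cross3

lemma eq_zero_of_mem_span_pair_of_inner_eq_zero {E : Type*} [NormedAddCommGroup E]
    [InnerProductSpace ℝ E] {u v a : E} (ha : a ∈ Submodule.span ℝ {u, v})
    (hu : ⟪a, u⟫ = 0) (hv : ⟪a, v⟫ = 0) : a = 0 := by
  obtain ⟨α, β, rfl⟩ := Submodule.mem_span_pair.mp ha
  rw [← inner_self_eq_zero (𝕜 := ℝ), inner_add_right, inner_smul_right, inner_smul_right, hu, hv]
  ring

section Algebra

variable {ρp ρm cp cm x y : ℝ}

lemma mul_sq_linear_lt_of_weighted_sq_lt (hρp : 0 < ρp) (hρm : 0 < ρm)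
    (hc : ρp * cm ^ 2 + ρm * cp ^ 2 < ρp + ρm) (hxy : x ≠ 0 ∨ y ≠ 0) :
    ρp * ρm * (cp * x + cm * y) ^ 2 < (ρp + ρm) * (ρp * x ^ 2 + ρm * y ^ 2) := by
  have hQ : 0 < ρp * x ^ 2 + ρm * y ^ 2 := by
    rcases hxy with hx | hy <;> positivity
  -- Lagrange's identity for the vectors `(√ρ₋ c₊, √ρ₊ c₋)` and `(√ρ₊ x, √ρ₋ y)`
  have lagrange : (ρp * cm ^ 2 + ρm * cp ^ 2) * (ρp * x ^ 2 + ρm * y ^ 2)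
      = ρp * ρm * (cp * x + cm * y) ^ 2 + (ρm * cp * y - ρp * cm * x) ^ 2 := by ring
  calc ρp * ρm * (cp * x + cm * y) ^ 2
      ≤ (ρp * cm ^ 2 + ρm * cp ^ 2) * (ρp * x ^ 2 + ρm * y ^ 2) := by
        rw [lagrange]; exact le_add_of_nonneg_right (sq_nonneg _)
    _ < (ρp + ρm) * (ρp * x ^ 2 + ρm * y ^ 2) := mul_lt_mul_of_pos_right hc hQ

lemma stabilizingForm_pos (hρp : 0 < ρp) (hρm : 0 < ρm)
    (hc : ρp * cm ^ 2 + ρm * cp ^ 2 < ρp + ρm) (hxy : x ≠ 0 ∨ y ≠ 0) :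
    0 < ρp / (ρp + ρm) * x ^ 2 + ρm / (ρp + ρm) * y ^ 2
      - ρp * ρm / (ρp + ρm) ^ 2 * (cp * x + cm * y) ^ 2 := by
  have hS : 0 < ρp + ρm := add_pos hρp hρm
  have hform : ρp / (ρp + ρm) * x ^ 2 + ρm / (ρp + ρm) * y ^ 2
      - ρp * ρm / (ρp + ρm) ^ 2 * (cp * x + cm * y) ^ 2
      = ((ρp + ρm) * (ρp * x ^ 2 + ρm * y ^ 2) - ρp * ρm * (cp * x + cm * y) ^ 2)
        / (ρp + ρm) ^ 2 := by
    field_simp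
  rw [hform]
  exact div_pos (sub_pos.mpr (mul_sq_linear_lt_of_weighted_sq_lt hρp hρm hc hxy)) (by positivity)

end Algebra

/-- Under the strict Syrovatskij condition, the stabilizing quadratic form is strictly
positive on every nonzero vector of the plane spanned by `h₊` and `h₋`. -/
theorem stmt5 (ρp ρm : ℝ) (hρp : 0 < ρp) (hρm : 0 < ρm)
    (hplus hminus w : EuclideanSpace ℝ (Fin 3))
    (hcross : cross3 hplus hminus ≠ 0)
    (hwspan : w ∈ Submodule.span ℝ {hplus, hminus})
    (hsyro : (ρp + ρm) * ‖cross3 hplus hminus‖ ^ 2 >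
        ρp * ‖cross3 hplus w‖ ^ 2 + ρm * ‖cross3 hminus w‖ ^ 2) :
    ∀ a ∈ Submodule.span ℝ {hplus, hminus}, a ≠ 0 →
      0 < ρp / (ρp + ρm) * (inner ℝ a hplus : ℝ) ^ 2 + ρm / (ρp + ρm) * (inner ℝ a hminus : ℝ) ^ 2
          - ρp * ρm / (ρp + ρm) ^ 2 * (inner ℝ a w : ℝ) ^ 2 := by
  intro a ha ha0
  obtain ⟨cp, cm, rfl⟩ := Submodule.mem_span_pair.mp hwspan
  have hN : 0 < ‖cross3 hplus hminus‖ ^ 2 := by positivity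
  rw [cross3_left_smul_add_smul, cross3_right_smul_add_smul, norm_smul, norm_smul,
    mul_pow, mul_pow, Real.norm_eq_abs, Real.norm_eq_abs, sq_abs, sq_abs, neg_sq] at hsyro
  have hc : ρp * cm ^ 2 + ρm * cp ^ 2 < ρp + ρm :=
    lt_of_mul_lt_mul_right (by linarith) hN.le
  have hxy : ⟪a, hplus⟫ ≠ 0 ∨ ⟪a, hminus⟫ ≠ 0 := by
    by_contra! h
    exact ha0 (eq_zero_of_mem_span_pair_of_inner_eq_zero ha h.1 h.2)
  rw [inner_add_right, real_inner_smul_right, real_inner_smul_right]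
  exact stabilizingForm_pos hρp hρm hc hxy
end

section
/- Let p, q > 0 with p + q = 1, let a, b ∈ ℝ² be linearly independent, and let w = w⁺·a + w⁻·b ∈ ℝ² with p·(w⁻)² + q·(w⁺)² < 1. Then the symmetric 2×2 matrix M := p·(a aᵀ) + q·(b bᵀ) − p·q·(w wᵀ) is positive definite. -/
/-!
With `u = x ⬝ᵥ a` and `v = x ⬝ᵥ b`, the quadratic form of the matrix at `x` is
`p u² + q v² − p q (w⁺ u + w⁻ v)²`, which equals the sum of squares
`(1 − (p (w⁻)² + q (w⁺)²)) (p u² + q v²) + (p w⁻ u − q w⁺ v)²`.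
The first term is positive as soon as `(u, v) ≠ 0`, and since `a, b` form a basis of `ℝ²`,
`(u, v) = 0` forces `x = 0`.
-/

open Matrix

lemma dotProduct_vecMulVec_self_mulVec {R n : Type*} [CommRing R] [Fintype n] (a x : n → R) :
    x ⬝ᵥ (vecMulVec a a *ᵥ x) = (x ⬝ᵥ a) ^ 2 := by
  rw [vecMulVec_mulVec, op_smul_eq_smul, dotProduct_smul, smul_eq_mul, dotProduct_comm a x, sq]

lemma isHermitian_vecMulVec_self {R n : Type*} [CommRing R] [StarRing R] [TrivialStar R]
    (a : n → R) : (vecMulVec a a).IsHermitian := by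
  rw [IsHermitian, conjTranspose_vecMulVec, star_trivial]

lemma eq_zero_of_forall_dotProduct_eq_zero {R ι n : Type*} [Field R] [LinearOrder R]
    [IsStrictOrderedRing R] [Fintype ι] [Fintype n] {v : ι → n → R}
    (hv : LinearIndependent R v) (hcard : Fintype.card ι = Fintype.card n) {x : n → R}
    (hx : ∀ i, x ⬝ᵥ v i = 0) : x = 0 := by
  have hspan : Submodule.span R (Set.range v) = ⊤ :=
    hv.span_eq_top_of_card_eq_finrank' (by simpa using hcard)
  have hker : Submodule.span R (Set.range v) ≤ LinearMap.ker (dotProductBilin R R x) :=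
    Submodule.span_le.mpr (Set.range_subset_iff.mpr hx)
  rw [hspan, top_le_iff, LinearMap.ker_eq_top] at hker
  exact dotProduct_self_eq_zero.mp (LinearMap.congr_fun hker x)

theorem stabilizing_quadratic_pos {p q wp wm u v : ℝ} (hp : 0 < p) (hq : 0 < q)
    (hsmall : p * wm ^ 2 + q * wp ^ 2 < 1) (huv : u ≠ 0 ∨ v ≠ 0) :
    0 < p * u ^ 2 + q * v ^ 2 - p * q * (wp * u + wm * v) ^ 2 := by
  have hpos : 0 < p * u ^ 2 + q * v ^ 2 := by
    rcases huv with hu | hv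
    · exact add_pos_of_pos_of_nonneg (by positivity) (by positivity)
    · exact add_pos_of_nonneg_of_pos (by positivity) (by positivity)
  have hsos : p * u ^ 2 + q * v ^ 2 - p * q * (wp * u + wm * v) ^ 2
      = (1 - (p * wm ^ 2 + q * wp ^ 2)) * (p * u ^ 2 + q * v ^ 2)
        + (p * wm * u - q * wp * v) ^ 2 := by ring
  rw [hsos]
  exact add_pos_of_pos_of_nonneg (mul_pos (sub_pos.mpr hsmall) hpos) (sq_nonneg _)

theorem stmt6_general (p q : ℝ) (hp : 0 < p) (hq : 0 < q)
    (a b : Fin 2 → ℝ) (hab : LinearIndependent ℝ ![a, b])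
    (wp wm : ℝ) (w : Fin 2 → ℝ) (hw : w = wp • a + wm • b)
    (hsmall : p * wm ^ 2 + q * wp ^ 2 < 1) :
    (p • Matrix.vecMulVec a a + q • Matrix.vecMulVec b b
      - (p * q) • Matrix.vecMulVec w w).PosDef := by
  refine posDef_iff_dotProduct_mulVec.mpr ⟨?_, fun x hx => ?_⟩
  · exact (((isHermitian_vecMulVec_self a).smul (.all p)).add
      ((isHermitian_vecMulVec_self b).smul (.all q))).sub
      ((isHermitian_vecMulVec_self w).smul (.all (p * q)))
  have hxab : x ⬝ᵥ a ≠ 0 ∨ x ⬝ᵥ b ≠ 0 := by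
    by_contra! h
    exact hx (eq_zero_of_forall_dotProduct_eq_zero hab (by simp) (Fin.forall_fin_two.mpr h))
  have hxw : x ⬝ᵥ w = wp * (x ⬝ᵥ a) + wm * (x ⬝ᵥ b) := by
    rw [hw, dotProduct_add, dotProduct_smul, dotProduct_smul, smul_eq_mul, smul_eq_mul]
  simp only [star_trivial, sub_mulVec, add_mulVec, smul_mulVec, dotProduct_sub, dotProduct_add,
    dotProduct_smul, dotProduct_vecMulVec_self_mulVec, hxw, smul_eq_mul]
  exact stabilizing_quadratic_pos hp hq hsmall hxab

/-- Matrix form of the stabilizing quadratic form: `p a aᵀ + q b bᵀ − p q w wᵀ` is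
positive definite when `p, q > 0`, `p + q = 1`, `a, b` are linearly independent and
`w = w⁺ a + w⁻ b` with `p (w⁻)² + q (w⁺)² < 1`. -/
theorem stmt6 (p q : ℝ) (hp : 0 < p) (hq : 0 < q) (hpq : p + q = 1)
    (a b : Fin 2 → ℝ) (hab : LinearIndependent ℝ ![a, b])
    (wp wm : ℝ) (w : Fin 2 → ℝ) (hw : w = wp • a + wm • b)
    (hsmall : p * wm ^ 2 + q * wp ^ 2 < 1) :
    (p • Matrix.vecMulVec a a + q • Matrix.vecMulVec b b
      - (p * q) • Matrix.vecMulVec w w).PosDef :=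
  stmt6_general p q hp hq a b hab wp wm w hw hsmall
end
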